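/- Fix p ∈ ℕ, p ≥ 1, h = 1/p. The *-algebra H^h of operators on L²(𝕋^N → ℂ^M) of the form (A u)(x) = Σ_{j ∈ (ℤ/pℤ)^N} A_j(x) u(x + h j), with each A_j a step function constant on cubes of side h, is *-isomorphic to the full matrix algebra ℂ^{Mp^N × Mp^N}; in particular the map A ↦ B_A from the previous construction is bijective. -/

import Mathlib

open MeasureTheory

noncomputable section

abbrev Torus (N : ℕ) := Fin N → AddCircle (1 : ℝ)

abbrev L2 (N M : ℕ) := Lp (EuclideanSpace ℂ (Fin M)) 2 (volume : Measure (Torus N))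

/-- The canonical representative in `[0,1)` of a point of `𝕋 = ℝ/ℤ`. -/
def lift1 (x : AddCircle (1 : ℝ)) : ℝ := (AddCircle.equivIco 1 0 x : ℝ)

/-- The index (in `(ℤ/pℤ)^N`) of the cube `∏_i [h p_i, h p_i + h)`, `h = 1/p`,
containing the point `x ∈ 𝕋^N`. -/
def cubeIdx (N p : ℕ) [NeZero p] (x : Torus N) : Fin N → ZMod p :=
  fun i => ((⌊lift1 (x i) * p⌋ : ℤ) : ZMod p)

/-- The shift vector `h j ∈ 𝕋^N` for `j ∈ (ℤ/pℤ)^N`, `h = 1/p`. -/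
def hvec (N p : ℕ) [NeZero p] (j : Fin N → ZMod p) : Torus N :=
  fun i => ((((j i).val : ℝ) / p : ℝ) : AddCircle (1 : ℝ))

/-- The action of the finite-difference-type operator with cube-step coefficients:
`(A u)(x) = Σ_{j ∈ (ℤ/pℤ)^N} A_j(x) u(x + h j)`, where the step function `A_j` has the
constant value `C j r` on the cube indexed by `r`. -/
def opOf (N M p : ℕ) [NeZero p]
    (C : (Fin N → ZMod p) → (Fin N → ZMod p) → Matrix (Fin M) (Fin M) ℂ)
    (u : Torus N → EuclideanSpace ℂ (Fin M)) : Torus N → EuclideanSpace ℂ (Fin M) :=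
  fun x => ∑ j : Fin N → ZMod p,
    Matrix.toEuclideanCLM (𝕜 := ℂ) (C j (cubeIdx N p x)) (u (x + hvec N p j))

/-- The block matrix `B_A = (A_{j−r}(y + h r))_{r,j} ∈ ℂ^{Mp^N × Mp^N}` associated with the
coefficients `C` (the value `A_{j-r}(y + h r)` being the constant value of `A_{j-r}` on the
cube indexed by `r`). -/
def Bmat (N M p : ℕ) [NeZero p]
    (C : (Fin N → ZMod p) → (Fin N → ZMod p) → Matrix (Fin M) (Fin M) ℂ) :
    Matrix ((Fin N → ZMod p) × Fin M) ((Fin N → ZMod p) × Fin M) ℂ :=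
  fun rq jq => C (jq.1 - rq.1) rq.1 rq.2 jq.2

/-!
Read the coefficient `C j r` (the value of `A_j` on the cube `r`) as the block `(r, r + j)` of a
matrix in `ℂ^{Mp^N × Mp^N}`. Translation by `h j` carries the cube `r` onto the cube `r + j`, so
composing two operators of `H^h` convolves their coefficients exactly as block matrices multiply,
and translation invariance of Haar measure turns the `L²` adjoint into the conjugate transpose.
Realising each operator on `L²` as a sum of multiplication operators by `L^∞` step functions
composed with translations, `B ↦ A` becomes a unital `*`-homomorphism onto `H^h`, inverse to
`A ↦ B_A`. For `M ≥ 1` it is injective because the matrix algebra is simple and `B(L²)` is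
nonzero.
-/

lemma hvec_apply (N p : ℕ) [NeZero p] (j : Fin N → ZMod p) (i : Fin N) :
    hvec N p j i = ZMod.toAddCircle (j i) :=
  (ZMod.toAddCircle_apply (j i)).symm

lemma hvec_add (N p : ℕ) [NeZero p] (j k : Fin N → ZMod p) :
    hvec N p (j + k) = hvec N p j + hvec N p k := by
  funext i
  simp only [hvec_apply, Pi.add_apply, map_add]

lemma hvec_zero (N p : ℕ) [NeZero p] : hvec N p 0 = 0 := by
  funext i
  simp only [hvec_apply, Pi.zero_apply, map_zero]

lemma intCast_floor_lift1_mul (p : ℕ) (t : ℝ) :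
    ((⌊lift1 (t : AddCircle (1 : ℝ)) * p⌋ : ℤ) : ZMod p) = ⌊t * p⌋ := by
  have hfract : Int.fract t * p = t * p + ((-⌊t⌋ * p : ℤ) : ℝ) := by
    rw [Int.fract]; push_cast; ring
  rw [lift1, AddCircle.coe_equivIco_mk_apply, div_one, mul_one, hfract, Int.floor_add_intCast]
  push_cast
  simp

lemma cubeIdx_add_hvec (N p : ℕ) [NeZero p] (x : Torus N) (j : Fin N → ZMod p) :
    cubeIdx N p (x + hvec N p j) = cubeIdx N p x + j := by
  funext i
  obtain ⟨t, ht⟩ := QuotientAddGroup.mk_surjective (x i)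
  have hp : (p : ℝ) ≠ 0 := Nat.cast_ne_zero.mpr (NeZero.ne p)
  have hshift : (t + (j i).val / p) * p = t * p + (((j i).val : ℤ) : ℝ) := by
    field_simp; push_cast; ring
  simp only [cubeIdx, Pi.add_apply, hvec, ← ht]
  rw [← QuotientAddGroup.mk_add, intCast_floor_lift1_mul, intCast_floor_lift1_mul, hshift,
    Int.floor_add_intCast]
  simp

lemma measurable_lift1 : Measurable lift1 :=
  measurable_subtype_coe.comp (AddCircle.measurableEquivIco (1 : ℝ) 0).measurable

lemma measurable_cubeIdx (N p : ℕ) [NeZero p] : Measurable (cubeIdx N p) :=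
  measurable_pi_lambda _ fun i =>
    (Measurable.of_discrete (f := ((↑) : ℤ → ZMod p))).comp
      ((measurable_lift1.comp (measurable_pi_apply i)).mul_const _).floor

open scoped ENNReal

lemma MeasureTheory.Lp.nontrivial {α E : Type*} [MeasurableSpace α] {μ : Measure α}
    [IsFiniteMeasure μ] [NeZero μ] [NormedAddCommGroup E] [Nontrivial E]
    {p : ℝ≥0∞} (hp : p ≠ 0) : Nontrivial (Lp E p μ) := by
  obtain ⟨c, hc⟩ := exists_ne (0 : E)
  refine nontrivial_of_ne (Lp.const p μ c) 0 fun h => ?_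
  have hnorm := Lp.norm_const p μ c hp
  rw [h, norm_zero] at hnorm
  have hμ : 0 < μ.real Set.univ := measureReal_univ_pos
  have := mul_pos (norm_pos_iff.mpr hc) (Real.rpow_pos_of_pos hμ (1 / p.toReal))
  linarith

section MulOp
variable {α E : Type*} [MeasurableSpace α] {μ : Measure α}
  [NormedAddCommGroup E] [NormedSpace ℂ E]

def mulOp (A : Lp (E →L[ℂ] E) ∞ μ) : Lp E 2 μ →L[ℂ] Lp E 2 μ :=
  (ContinuousLinearMap.id ℂ (E →L[ℂ] E)).holderL μ ∞ 2 2 A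

lemma coeFn_mulOp (A : Lp (E →L[ℂ] E) ∞ μ) (u : Lp E 2 μ) :
    mulOp A u =ᵐ[μ] fun x => A x (u x) :=
  ContinuousLinearMap.coeFn_holder _ A u

end MulOp

lemma memLp_top_comp_of_finite {α ι F : Type*} [MeasurableSpace α] {μ : Measure α}
    [MeasurableSpace ι] [MeasurableSingletonClass ι] [Finite ι] [NormedAddCommGroup F]
    (G : ι → F) {f : α → ι} (hf : Measurable f) : MemLp (G ∘ f) ∞ μ := by
  obtain ⟨C, hC⟩ := (Set.finite_range G).isBounded.exists_norm_le
  exact memLp_top_of_bound (StronglyMeasurable.of_discrete.comp_measurable hf).aestronglyMeasurable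
    C (.of_forall fun x => hC _ (Set.mem_range_self _))

section CubeOperators
variable {N M p : ℕ}

local notation "Coef" => (Fin N → ZMod p) → (Fin N → ZMod p) → Matrix (Fin M) (Fin M) ℂ

variable (N M p) in
def blockCoef (B : Matrix ((Fin N → ZMod p) × Fin M) ((Fin N → ZMod p) × Fin M) ℂ) : Coef :=
  fun j r => Matrix.of fun q q' => B (r, q) (r + j, q')

def coefAdj (C : Coef) : Coef :=
  fun j r => star (C (-j) (r + j))

lemma blockCoef_star (B : Matrix ((Fin N → ZMod p) × Fin M) ((Fin N → ZMod p) × Fin M) ℂ) :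
    blockCoef N M p (star B) = coefAdj (blockCoef N M p B) := by
  funext j r q q'
  simp [blockCoef, coefAdj, Matrix.star_apply]

variable [NeZero p]

def coefMul (C C' : Coef) : Coef :=
  fun m r => ∑ j, C j r * C' (m - j) (r + j)

lemma blockCoef_Bmat (C : Coef) : blockCoef N M p (Bmat N M p C) = C := by
  funext j r q q'
  simp [blockCoef, Bmat]

lemma blockCoef_mul (B B' : Matrix ((Fin N → ZMod p) × Fin M) ((Fin N → ZMod p) × Fin M) ℂ) :
    blockCoef N M p (B * B') = coefMul (blockCoef N M p B) (blockCoef N M p B') := by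
  funext m r q q'
  simp only [blockCoef, coefMul, Matrix.sum_apply, Matrix.mul_apply, Matrix.of_apply,
    Fintype.sum_prod_type]
  refine (Fintype.sum_equiv (Equiv.addLeft r) _ _ fun j => ?_).symm
  simp only [Equiv.coe_addLeft, add_add_sub_cancel]

lemma opOf_ae_congr (C : Coef) {u v : Torus N → EuclideanSpace ℂ (Fin M)}
    (huv : u =ᵐ[volume] v) : opOf N M p C u =ᵐ[volume] opOf N M p C v := by
  have hshift : ∀ᵐ x ∂(volume : Measure (Torus N)), ∀ j,
      u (x + hvec N p j) = v (x + hvec N p j) :=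
    ae_all_iff.mpr fun j =>
      (measurePreserving_add_right volume (hvec N p j)).quasiMeasurePreserving.ae_eq_comp huv
  filter_upwards [hshift] with x hx
  simp only [opOf, hx]

lemma opOf_add (C C' : Coef) (u : Torus N → EuclideanSpace ℂ (Fin M)) :
    opOf N M p (C + C') u = opOf N M p C u + opOf N M p C' u := by
  funext x
  simp only [opOf, Pi.add_apply, map_add, _root_.add_apply, Finset.sum_add_distrib]

lemma opOf_smul (c : ℂ) (C : Coef) (u : Torus N → EuclideanSpace ℂ (Fin M)) :
    opOf N M p (c • C) u = c • opOf N M p C u := by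
  funext x
  simp only [opOf, Pi.smul_apply, map_smul, _root_.smul_apply, Finset.smul_sum]

lemma opOf_blockCoef_one (u : Torus N → EuclideanSpace ℂ (Fin M)) :
    opOf N M p (blockCoef N M p 1) u = u := by
  classical
  funext x
  have hcoef : ∀ j, blockCoef N M p 1 j (cubeIdx N p x) = if j = 0 then 1 else 0 := by
    intro j
    split_ifs with hj
    · subst hj; ext q q'; simp [blockCoef, Matrix.one_apply]
    · ext q q'; simp [blockCoef, hj]
  rw [opOf, Finset.sum_eq_single 0 (fun j _ hj => by simp [hcoef, hj]) (by simp)]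
  simp [hcoef, hvec_zero]

lemma opOf_opOf (C C' : Coef) (u : Torus N → EuclideanSpace ℂ (Fin M)) :
    opOf N M p C (opOf N M p C' u) = opOf N M p (coefMul C C') u := by
  funext x
  simp only [opOf, coefMul, cubeIdx_add_hvec, map_sum, _root_.sum_apply,
    map_mul, mul_apply_eq_comp, add_assoc, ← hvec_add]
  conv_rhs => rw [Finset.sum_comm]
  refine Finset.sum_congr rfl fun j _ => ?_
  exact Fintype.sum_equiv (Equiv.addLeft j) _ _ fun k => by simp

variable (N M p) in
def stepCoeff (A : (Fin N → ZMod p) → Matrix (Fin M) (Fin M) ℂ) :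
    Lp (EuclideanSpace ℂ (Fin M) →L[ℂ] EuclideanSpace ℂ (Fin M)) ∞ (volume : Measure (Torus N)) :=
  (memLp_top_comp_of_finite (fun r => Matrix.toEuclideanCLM (𝕜 := ℂ) (A r))
    (measurable_cubeIdx N p)).toLp _

variable (N M) in
def shiftOp (c : Torus N) : L2 N M →L[ℂ] L2 N M :=
  (Lp.compMeasurePreservingₗᵢ ℂ (· + c)
    (measurePreserving_add_right volume c)).toContinuousLinearMap

variable (N M p) in
def termOp (C : Coef) (j : Fin N → ZMod p) : L2 N M →L[ℂ] L2 N M :=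
  mulOp (stepCoeff N M p (C j)) ∘L shiftOp N M (hvec N p j)

variable (N M p) in
def coefOp (C : Coef) : L2 N M →L[ℂ] L2 N M :=
  ∑ j, termOp N M p C j

lemma coeFn_termOp (C : Coef) (j : Fin N → ZMod p) (u : L2 N M) :
    termOp N M p C j u =ᵐ[volume]
      fun x => Matrix.toEuclideanCLM (𝕜 := ℂ) (C j (cubeIdx N p x)) (u (x + hvec N p j)) := by
  filter_upwards [coeFn_mulOp (stepCoeff N M p (C j)) (shiftOp N M (hvec N p j) u),
    MemLp.coeFn_toLp (memLp_top_comp_of_finite (μ := volume)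
      (fun r => Matrix.toEuclideanCLM (𝕜 := ℂ) (C j r)) (measurable_cubeIdx N p)),
    Lp.coeFn_compMeasurePreserving u _] with x hmul hstep hshift
  rw [termOp, ContinuousLinearMap.comp_apply, hmul, stepCoeff, hstep]
  exact congrArg _ hshift

lemma coeFn_coefOp (C : Coef) (u : L2 N M) :
    coefOp N M p C u =ᵐ[volume] opOf N M p C u := by
  rw [coefOp, _root_.sum_apply]
  filter_upwards [Lp.coeFn_fun_finsetSum Finset.univ fun j => termOp N M p C j u,
    ae_all_iff.mpr fun j => coeFn_termOp C j u] with x hsum hterm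
  rw [hsum]
  exact Finset.sum_congr rfl fun j _ => hterm j

lemma eq_coefOp_of_ae {C : Coef} {T : L2 N M →L[ℂ] L2 N M}
    (h : ∀ u : L2 N M, T u =ᵐ[volume] opOf N M p C u) : T = coefOp N M p C :=
  ContinuousLinearMap.ext fun u => Lp.ext ((h u).trans (coeFn_coefOp C u).symm)

lemma inner_termOp_coefAdj (C : Coef) (k : Fin N → ZMod p) (u v : L2 N M) :
    inner ℂ (termOp N M p (coefAdj C) (-k) u) v = inner ℂ u (termOp N M p C k v) := by
  rw [L2.inner_def, L2.inner_def]
  calc ∫ x, inner ℂ (termOp N M p (coefAdj C) (-k) u x) (v x)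
      = ∫ x, inner ℂ (u (x + hvec N p (-k)))
          (Matrix.toEuclideanCLM (𝕜 := ℂ) (C k (cubeIdx N p (x + hvec N p (-k))))
            (v (x + hvec N p (-k) + hvec N p k))) := by
        refine integral_congr_ae ?_
        filter_upwards [coeFn_termOp (coefAdj C) (-k) u] with x hx
        rw [hx, coefAdj, neg_neg, map_star, ContinuousLinearMap.star_eq_adjoint,
          ContinuousLinearMap.adjoint_inner_left, cubeIdx_add_hvec, add_assoc, ← hvec_add,
          neg_add_cancel, hvec_zero, add_zero]
    _ = ∫ x, inner ℂ (u x) (Matrix.toEuclideanCLM (𝕜 := ℂ) (C k (cubeIdx N p x))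
          (v (x + hvec N p k))) :=
        integral_add_right_eq_self (fun x => inner ℂ (u x)
          (Matrix.toEuclideanCLM (𝕜 := ℂ) (C k (cubeIdx N p x)) (v (x + hvec N p k)))) _
    _ = ∫ x, inner ℂ (u x) (termOp N M p C k v x) := by
        refine integral_congr_ae ?_
        filter_upwards [coeFn_termOp C k v] with x hx
        rw [hx]

lemma coefOp_coefAdj (C : Coef) :
    coefOp N M p (coefAdj C) = ContinuousLinearMap.adjoint (coefOp N M p C) := by
  refine (ContinuousLinearMap.eq_adjoint_iff _ _).mpr fun u v => ?_
  rw [coefOp, coefOp, _root_.sum_apply, _root_.sum_apply, sum_inner, inner_sum]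
  exact Fintype.sum_equiv (Equiv.neg _) _ _ fun j => by
    rw [Equiv.neg_apply, ← inner_termOp_coefAdj, neg_neg]

lemma coefOp_add (C C' : Coef) :
    coefOp N M p (C + C') = coefOp N M p C + coefOp N M p C' := by
  refine (eq_coefOp_of_ae fun u => ?_).symm
  rw [opOf_add, _root_.add_apply]
  exact (Lp.coeFn_add _ _).trans ((coeFn_coefOp C u).add (coeFn_coefOp C' u))

lemma coefOp_smul (c : ℂ) (C : Coef) : coefOp N M p (c • C) = c • coefOp N M p C := by
  refine (eq_coefOp_of_ae fun u => ?_).symm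
  rw [opOf_smul, _root_.smul_apply]
  exact (Lp.coeFn_smul _ _).trans ((coeFn_coefOp C u).const_smul c)

lemma coefOp_coefMul (C C' : Coef) :
    coefOp N M p (coefMul C C') = coefOp N M p C * coefOp N M p C' := by
  refine (eq_coefOp_of_ae fun u => ?_).symm
  rw [← opOf_opOf]
  exact (coeFn_coefOp C _).trans (opOf_ae_congr C (coeFn_coefOp C' u))

lemma coefOp_blockCoef_one : coefOp N M p (blockCoef N M p 1) = 1 :=
  (eq_coefOp_of_ae fun u => by rw [opOf_blockCoef_one]; exact .rfl).symm

variable (N M p) in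
def blockOp : Matrix ((Fin N → ZMod p) × Fin M) ((Fin N → ZMod p) × Fin M) ℂ
    →⋆ₐ[ℂ] (L2 N M →L[ℂ] L2 N M) :=
  { AlgHom.ofLinearMap
      { toFun := fun B => coefOp N M p (blockCoef N M p B)
        map_add' := fun _ _ => coefOp_add _ _
        map_smul' := fun c _ => coefOp_smul c _ }
      coefOp_blockCoef_one
      fun B B' => (congrArg (coefOp N M p) (blockCoef_mul B B')).trans (coefOp_coefMul _ _) with
    map_star' := fun B => (congrArg (coefOp N M p) (blockCoef_star B)).trans
      (coefOp_coefAdj _) }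

lemma blockOp_apply (B : Matrix ((Fin N → ZMod p) × Fin M) ((Fin N → ZMod p) × Fin M) ℂ) :
    blockOp N M p B = coefOp N M p (blockCoef N M p B) := rfl

lemma blockOp_Bmat {C : Coef} {T : L2 N M →L[ℂ] L2 N M}
    (hT : ∀ u : L2 N M, T u =ᵐ[volume] opOf N M p C u) : blockOp N M p (Bmat N M p C) = T := by
  rw [blockOp_apply, blockCoef_Bmat, eq_coefOp_of_ae hT]

lemma blockOp_injective : Function.Injective (blockOp N M p) := by
  rcases isEmpty_or_nonempty (Fin M) with hM | hM
  · exact Function.injective_of_subsingleton _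
  · have : Nontrivial (L2 N M) := Lp.nontrivial two_ne_zero
    exact (blockOp N M p).toAlgHom.toRingHom.injective

end CubeOperators

/-- Fix `p ≥ 1`, `h = 1/p`.  The `*`-algebra `H^h` of operators
`(A u)(x) = Σ_j A_j(x) u(x + h j)` with cube-step coefficients is `*`-isomorphic to the full
matrix algebra `ℂ^{Mp^N × Mp^N}`: there is an injective unital `*`-algebra homomorphism
`Φ` from the matrix algebra into `B(L²)` whose range is exactly `H^h` and which inverts the
assignment `A ↦ B_A`; in particular `A ↦ B_A` is bijective. -/
theorem stmt7 (N M p : ℕ) [NeZero p] :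
    ∃ Φ : Matrix ((Fin N → ZMod p) × Fin M) ((Fin N → ZMod p) × Fin M) ℂ
        →⋆ₐ[ℂ] (L2 N M →L[ℂ] L2 N M),
      Function.Injective Φ ∧
      Set.range Φ = {T : L2 N M →L[ℂ] L2 N M |
        ∃ C, ∀ u : L2 N M,
          (T u : Torus N → EuclideanSpace ℂ (Fin M)) =ᵐ[volume] opOf N M p C u} ∧
      ∀ (C : (Fin N → ZMod p) → (Fin N → ZMod p) → Matrix (Fin M) (Fin M) ℂ)
        (T : L2 N M →L[ℂ] L2 N M),
        (∀ u : L2 N M,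
          (T u : Torus N → EuclideanSpace ℂ (Fin M)) =ᵐ[volume] opOf N M p C u) →
        Φ (Bmat N M p C) = T := by
  refine ⟨blockOp N M p, blockOp_injective, ?_, fun C T hT => blockOp_Bmat hT⟩
  ext T
  constructor
  · rintro ⟨B, rfl⟩
    exact ⟨blockCoef N M p B, coeFn_coefOp _⟩
  · rintro ⟨C, hC⟩
    exact ⟨Bmat N M p C, blockOp_Bmat hC⟩
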